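/- arXiv:1910.13139 — 10 statements merged into one kernel-verified Lean document; each statement's English description precedes it below -/
import Mathlib

section
/- Let m ≥ 1 and let A be a symmetric positive definite m×m matrix with real entries and determinant D, defining the positive definite quadratic form f(x) = xᵀAx. Then there exists a vector v ∈ ℤ^m with v ≠ 0 such that 0 < f(v) ≤ (4/3)^((m−1)/2) · D^(1/m). -/
/-!
Hermite's argument, by induction on the dimension. Let `μ` be the minimum of the form on nonzero
integer vectors, attained at `v`. Minimality makes `v` primitive, so after an integral change of
coordinates `v` is the last basis vector and `μ` is the last diagonal entry. Completing the square
in the last coordinate writes the form as `μ (t + ℓ(x))² + g(x)`, where `g` is the Schur complement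
of `μ`, a positive definite form in one variable fewer with `det = μ · det g`. Given any nonzero
integer `x`, rounding `-ℓ(x)` to an integer `t` gives `μ ≤ μ/4 + g(x)`, i.e. `μ ≤ 4/3 · g(x)`; by
induction `g(x) ^ (m-1) ≤ (4/3) ^ ((m-1)(m-2)/2) det g` for some `x`, and hence
`μ ^ m ≤ (4/3) ^ (m(m-1)/2) det`.
-/

open Matrix Filter Topology

lemma Module.Basis.exists_basis_apply_eq {R M ι : Type*} [CommRing R] [IsDomain R]
    [IsPrincipalIdealRing R] [AddCommGroup M] [Module R M] [Finite ι] (b : Basis ι R M)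
    {v : M} (hv : v ≠ 0) (hprim : ∀ (d : R) (w : M), v = d • w → IsUnit d) (j : ι) :
    ∃ b' : Basis ι R M, b' j = v := by
  classical
  -- `R ∙ v` has rank one, so its Smith normal form gives `v = c • a • e` for a vector `e` of a
  -- basis of `M`; by primitivity `c * a` is a unit, by which `e` may be rescaled to `v`.
  have : Module.Free R M := Module.Free.of_basis b
  obtain ⟨n, snf⟩ := (R ∙ v).smithNormalForm b
  obtain rfl : n = 1 := by
    rw [← Fintype.card_fin n, ← Module.finrank_eq_card_basis snf.bN,
      ← (LinearEquiv.toSpanNonzeroSingleton R M v hv).finrank_eq, Module.finrank_self]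
  have hsum := congrArg Subtype.val (snf.bN.sum_repr ⟨v, Submodule.mem_span_singleton_self v⟩)
  rw [Fin.sum_univ_one, Submodule.coe_smul, snf.snf, smul_smul] at hsum
  obtain ⟨u, hu⟩ := hprim _ _ hsum.symm
  let b₁ := snf.bM.unitsSMul (Function.update 1 (snf.f 0) u)
  refine ⟨b₁.reindex (Equiv.swap (snf.f 0) j), ?_⟩
  rw [Module.Basis.reindex_apply, Equiv.symm_swap, Equiv.swap_apply_right,
    Module.Basis.unitsSMul_apply, Function.update_self, Units.smul_def, hu]
  exact hsum

namespace Matrix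

section QuadraticForm

variable {ι κ R : Type*} [Fintype ι] [Fintype κ] [CommSemiring R]

lemma smul_dotProduct_mulVec_smul (A : Matrix ι ι R) (c : R) (x : ι → R) :
    c • x ⬝ᵥ A *ᵥ (c • x) = c ^ 2 * (x ⬝ᵥ A *ᵥ x) := by
  rw [mulVec_smul, dotProduct_smul, smul_dotProduct, smul_eq_mul, smul_eq_mul, ← mul_assoc, sq]

lemma dotProduct_mulVec_transpose_mul_mul (V : Matrix ι κ R) (A : Matrix ι ι R) (x : κ → R) :
    x ⬝ᵥ (Vᵀ * A * V) *ᵥ x = V *ᵥ x ⬝ᵥ A *ᵥ (V *ᵥ x) := by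
  rw [← mulVec_mulVec, ← mulVec_mulVec, dotProduct_mulVec, vecMul_transpose]

lemma dotProduct_mulVec_submatrix_equiv (A : Matrix ι ι R) (e : κ ≃ ι) (x : κ → R) :
    x ⬝ᵥ A.submatrix e e *ᵥ x = x ∘ e.symm ⬝ᵥ A *ᵥ (x ∘ e.symm) := by
  rw [submatrix_mulVec_equiv, comp_equiv_symm_dotProduct]

lemma dotProduct_mulVec_fin_one (D : Matrix (Fin 1) (Fin 1) R) (z : Fin 1 → R) :
    z ⬝ᵥ D *ᵥ z = D 0 0 * z 0 ^ 2 := by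
  simp [dotProduct, mulVec]
  ring

end QuadraticForm

section IntegerVectors

variable {ι κ R : Type*}

lemma intCast_comp_ne_zero [AddGroupWithOne R] [CharZero R] {v : ι → ℤ} (hv : v ≠ 0) :
    (fun i => (v i : R)) ≠ 0 :=
  fun h => hv (funext fun i => by simpa using congrFun h i)

lemma intCast_single [AddGroupWithOne R] [DecidableEq ι] (j : ι) :
    (fun i => ((Pi.single j 1 : ι → ℤ) i : R)) = Pi.single j 1 := by
  ext i
  rcases eq_or_ne i j with rfl | h <;> simp [*]

lemma map_intCast_mulVec [NonAssocRing R] [Fintype κ] (U : Matrix ι κ ℤ) (w : κ → ℤ) :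
    U.map ((↑) : ℤ → R) *ᵥ (fun i => (w i : R)) = fun i => ((U *ᵥ w) i : R) :=
  funext fun i => (RingHom.map_mulVec (Int.castRingHom R) U w i).symm

lemma tendsto_intCast_cofinite_cocompact [Finite ι] :
    Tendsto (fun (v : ι → ℤ) i => (v i : ℝ)) cofinite (cocompact (ι → ℝ)) := by
  simpa only [coprodᵢ_cofinite, coprodᵢ_cocompact] using
    Tendsto.pi_map_coprodᵢ fun _ : ι => Int.tendsto_coe_cofinite

lemma exists_isUnit_det_mulVec_single_eq [Fintype ι] [DecidableEq ι] {v : ι → ℤ} (hv : v ≠ 0)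
    (hprim : ∀ (d : ℤ) (w : ι → ℤ), v = d • w → IsUnit d) (j : ι) :
    ∃ U : Matrix ι ι ℤ, IsUnit U.det ∧ U *ᵥ Pi.single j 1 = v := by
  obtain ⟨b, hb⟩ := (Pi.basisFun ℤ ι).exists_basis_apply_eq hv hprim j
  have := (Pi.basisFun ℤ ι).invertibleToMatrix b
  refine ⟨(Pi.basisFun ℤ ι).toMatrix b, isUnit_det_of_invertible _, ?_⟩
  ext i
  simp [Module.Basis.toMatrix_apply, hb]

end IntegerVectors

lemma fromBlocks_toBlocks_of_isHermitian {m n α : Type*} [InvolutiveStar α]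
    {M : Matrix (m ⊕ n) (m ⊕ n) α} (hM : M.IsHermitian) :
    fromBlocks M.toBlocks₁₁ M.toBlocks₁₂ M.toBlocks₁₂ᴴ M.toBlocks₂₂ = M := by
  rw [← fromBlocks_toBlocks M, isHermitian_fromBlocks_iff] at hM
  rw [hM.2.1, fromBlocks_toBlocks]

section Schur

variable {m n R : Type*} [Fintype m] [Fintype n] [DecidableEq n] [CommRing R] [PartialOrder R]
  [StarRing R]

lemma PosDef.of_fromBlocks₂₂ {A : Matrix m m R} {B : Matrix m n R} {D : Matrix n n R}
    [Invertible D] (h : (fromBlocks A B Bᴴ D).PosDef) : (A - B * D⁻¹ * Bᴴ).PosDef := by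
  have hD : D.IsHermitian := (isHermitian_fromBlocks_iff.mp h.isHermitian).2.2.2
  refine .of_dotProduct_mulVec_pos ((IsHermitian.fromBlocks₂₂ A B hD).mp h.isHermitian)
    fun x hx => ?_
  have key := schur_complement_eq₂₂ A B x (-((D⁻¹ * Bᴴ) *ᵥ x)) hD
  rw [add_neg_cancel, star_zero, zero_vecMul, zero_dotProduct, zero_add] at key
  rw [dotProduct_mulVec, ← key, ← dotProduct_mulVec]
  exact h.dotProduct_mulVec_pos fun h0 => hx (by simpa using congrArg (· ∘ Sum.inl) h0)

end Schur

section PosDef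

variable {ι κ : Type*} [Fintype ι] [Fintype κ]

lemma PosDef.exists_pos_mul_norm_sq_le [Nonempty ι] {A : Matrix ι ι ℝ} (hA : A.PosDef) :
    ∃ ε > 0, ∀ x : ι → ℝ, ε * ‖x‖ ^ 2 ≤ x ⬝ᵥ A *ᵥ x := by
  have hcont : Continuous fun x : ι → ℝ => x ⬝ᵥ A *ᵥ x := by fun_prop
  obtain ⟨u, hu, hmin⟩ := (isCompact_sphere (0 : ι → ℝ) 1).exists_isMinOn
    (NormedSpace.sphere_nonempty.mpr zero_le_one) hcont.continuousOn
  refine ⟨_, by simpa using hA.dotProduct_mulVec_pos (ne_zero_of_mem_unit_sphere ⟨u, hu⟩),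
    fun x => ?_⟩
  rcases eq_or_ne x 0 with rfl | hx
  · simp
  have hx' : ‖x‖⁻¹ • x ∈ Metric.sphere (0 : ι → ℝ) 1 := by
    simp [norm_smul, inv_mul_cancel₀ (norm_ne_zero_iff.mpr hx)]
  calc (u ⬝ᵥ A *ᵥ u) * ‖x‖ ^ 2 ≤ (‖x‖⁻¹ • x ⬝ᵥ A *ᵥ (‖x‖⁻¹ • x)) * ‖x‖ ^ 2 := by
        gcongr
        exact hmin hx'
    _ = x ⬝ᵥ A *ᵥ x := by
      rw [smul_dotProduct_mulVec_smul]
      field_simp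

lemma PosDef.tendsto_dotProduct_mulVec_cocompact {A : Matrix ι ι ℝ} (hA : A.PosDef) :
    Tendsto (fun x : ι → ℝ => x ⬝ᵥ A *ᵥ x) (cocompact (ι → ℝ)) atTop := by
  cases isEmpty_or_nonempty ι
  · simp [cocompact_eq_bot]
  obtain ⟨ε, hε, hle⟩ := hA.exists_pos_mul_norm_sq_le
  exact tendsto_atTop_mono hle <| .const_mul_atTop hε <|
    (tendsto_pow_atTop two_ne_zero).comp tendsto_norm_cocompact_atTop

lemma PosDef.exists_forall_intCast_le [Nonempty ι] {A : Matrix ι ι ℝ} (hA : A.PosDef) :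
    ∃ v : ι → ℤ, v ≠ 0 ∧ ∀ w : ι → ℤ, w ≠ 0 →
      (fun i => (v i : ℝ)) ⬝ᵥ A *ᵥ (fun i => (v i : ℝ)) ≤
        (fun i => (w i : ℝ)) ⬝ᵥ A *ᵥ (fun i => (w i : ℝ)) :=
  (hA.tendsto_dotProduct_mulVec_cocompact.comp tendsto_intCast_cofinite_cocompact)
    |>.exists_within_forall_le (exists_ne 0)

lemma PosDef.isUnit_of_eq_smul_of_forall_le {A : Matrix ι ι ℝ} (hA : A.PosDef) {v : ι → ℤ}
    (hv : v ≠ 0) (hmin : ∀ w : ι → ℤ, w ≠ 0 →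
      (fun i => (v i : ℝ)) ⬝ᵥ A *ᵥ (fun i => (v i : ℝ)) ≤
        (fun i => (w i : ℝ)) ⬝ᵥ A *ᵥ (fun i => (w i : ℝ)))
    {d : ℤ} {w : ι → ℤ} (h : v = d • w) : IsUnit d := by
  subst h
  have hw : w ≠ 0 := by rintro rfl; simp at hv
  have hd : d ≠ 0 := by rintro rfl; simp at hv
  have hpos := hA.dotProduct_mulVec_pos (intCast_comp_ne_zero hw)
  have hle := hmin w hw
  rw [show (fun i => ((d • w) i : ℝ)) = (d : ℝ) • fun i => (w i : ℝ) by ext; simp,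
    smul_dotProduct_mulVec_smul] at hle
  have hd2 : (d : ℝ) ^ 2 ≤ 1 := le_of_mul_le_mul_right (by simpa using hle) (by simpa using hpos)
  exact Int.isUnit_iff_abs_eq.mpr <| le_antisymm
    ((sq_le_one_iff_abs_le_one d).mp (by exact_mod_cast hd2)) (Int.one_le_abs hd)

lemma PosDef.exists_intEquiv_diag_eq_min [DecidableEq ι] [DecidableEq κ] {A : Matrix ι ι ℝ}
    (hA : A.PosDef) (e : κ ≃ ι) (j : κ) :
    ∃ v : ι → ℤ, v ≠ 0 ∧ ∃ M : Matrix κ κ ℝ, M.PosDef ∧ M.det = A.det ∧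
      M j j = (fun i => (v i : ℝ)) ⬝ᵥ A *ᵥ (fun i => (v i : ℝ)) ∧
      ∀ w : κ → ℤ, w ≠ 0 → M j j ≤ (fun i => (w i : ℝ)) ⬝ᵥ M *ᵥ (fun i => (w i : ℝ)) := by
  have : Nonempty ι := ⟨e j⟩
  obtain ⟨v, hv, hmin⟩ := hA.exists_forall_intCast_le
  obtain ⟨U, hU, hUv⟩ := exists_isUnit_det_mulVec_single_eq hv
    (fun _ _ => hA.isUnit_of_eq_smul_of_forall_le hv hmin) (e j)
  set V := U.map ((↑) : ℤ → ℝ)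
  have hVdet : V.det = U.det := (RingHom.map_det (Int.castRingHom ℝ) U).symm
  have hV : IsUnit V := (isUnit_iff_isUnit_det V).mpr (hVdet ▸ hU.map (Int.castRingHom ℝ))
  set M := (Vᵀ * A * V).submatrix e e
  have hM (w : κ → ℤ) : (fun i => (w i : ℝ)) ⬝ᵥ M *ᵥ (fun i => (w i : ℝ)) =
      (fun i => ((U *ᵥ (w ∘ e.symm)) i : ℝ)) ⬝ᵥ A *ᵥ (fun i => ((U *ᵥ (w ∘ e.symm)) i : ℝ)) := by
    rw [dotProduct_mulVec_submatrix_equiv, dotProduct_mulVec_transpose_mul_mul]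
    exact congrArg (fun x => x ⬝ᵥ A *ᵥ x) (map_intCast_mulVec U (w ∘ e.symm))
  have hMjj : M j j = (fun i => (v i : ℝ)) ⬝ᵥ A *ᵥ (fun i => (v i : ℝ)) := by
    have := hM (Pi.single j 1)
    rw [Pi.single_comp_equiv, Equiv.symm_symm, hUv, intCast_single] at this
    simpa using this
  refine ⟨v, hv, M, ?_, ?_, hMjj, fun w hw => ?_⟩
  · have : (Vᵀ * A * V).PosDef := by
      simpa using hA.conjTranspose_mul_mul_same (mulVec_injective_of_isUnit hV)
    exact this.submatrix e.injective
  · rw [det_submatrix_equiv_self, det_mul, det_mul, det_transpose, hVdet]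
    rcases Int.isUnit_iff.mp hU with h | h <;> simp [h]
  · rw [hMjj, hM]
    refine hmin _ (((mulVec_injective_of_isUnit ((isUnit_iff_isUnit_det U).mpr hU)).ne_iff'
      (mulVec_zero U)).mpr fun h => hw (funext fun k => by simpa using congrFun h (e k)))

lemma le_four_thirds_mul_of_fromBlocks {A : Matrix ι ι ℝ} {B : Matrix ι (Fin 1) ℝ}
    {D : Matrix (Fin 1) (Fin 1) ℝ} [Invertible D] (hD : D.PosDef)
    (hmin : ∀ v : ι ⊕ Fin 1 → ℤ, v ≠ 0 →
      D 0 0 ≤ (fun i => (v i : ℝ)) ⬝ᵥ fromBlocks A B Bᴴ D *ᵥ (fun i => (v i : ℝ)))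
    {w : ι → ℤ} (hw : w ≠ 0) :
    D 0 0 ≤ 4 / 3 * ((fun i => (w i : ℝ)) ⬝ᵥ (A - B * D⁻¹ * Bᴴ) *ᵥ (fun i => (w i : ℝ))) := by
  set x : ι → ℝ := fun i => (w i : ℝ)
  set s := ((D⁻¹ * Bᴴ) *ᵥ x) 0
  set v : ι ⊕ Fin 1 → ℤ := Sum.elim w fun _ => -round s
  have hv : v ≠ 0 := fun h => hw (by simpa [v] using congrArg (· ∘ Sum.inl) h)
  have hcast : (fun i => (v i : ℝ)) = Sum.elim x fun _ => -(round s : ℝ) := by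
    ext (i | i) <;> simp [v, x]
  have hsplit := schur_complement_eq₂₂ A B x (fun _ => -(round s : ℝ)) hD.isHermitian
  simp only [star_trivial, ← dotProduct_mulVec, dotProduct_mulVec_fin_one, Pi.add_apply,
    ← sub_eq_add_neg, ← hcast] at hsplit
  have hround : (s - round s) ^ 2 ≤ 1 / 4 := by
    rw [← sq_abs]
    exact (pow_le_pow_left₀ (abs_nonneg _) (abs_sub_round s) 2).trans_eq (by norm_num)
  have := mul_le_mul_of_nonneg_left hround (hD.diag_pos (i := 0)).le
  linarith [hmin v hv]

theorem PosDef.exists_intCast_pow_le_det : ∀ (n : ℕ) {A : Matrix (Fin (n + 1)) (Fin (n + 1)) ℝ},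
    A.PosDef → ∃ v : Fin (n + 1) → ℤ, v ≠ 0 ∧
      ((fun i => (v i : ℝ)) ⬝ᵥ A *ᵥ (fun i => (v i : ℝ))) ^ (n + 1) ≤
        (4 / 3 : ℝ) ^ (n + 1).choose 2 * A.det
  | 0, A, _ => ⟨Pi.single 0 1, by simp, by simp [intCast_single]⟩
  | n + 1, A, hA => by
    obtain ⟨v, hv, M, hM, hdet, hμ, hmin⟩ := hA.exists_intEquiv_diag_eq_min finSumFinEquiv (.inr 0)
    obtain ⟨P, Q, D, rfl⟩ : ∃ P Q D, M = fromBlocks P Q Qᴴ D :=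
      ⟨_, _, _, (fromBlocks_toBlocks_of_isHermitian hM.isHermitian).symm⟩
    have hD : D.PosDef := hM.submatrix Sum.inr_injective
    let := hD.isUnit.invertible
    obtain ⟨w, hw, hwC⟩ := exists_intCast_pow_le_det n hM.of_fromBlocks₂₂
    have hμC := le_four_thirds_mul_of_fromBlocks hD hmin hw
    have hdetA : A.det = D 0 0 * (P - Q * D⁻¹ * Qᴴ).det := by
      rw [← hdet, det_fromBlocks₂₂, det_fin_one, invOf_eq_nonsing_inv]
    refine ⟨v, hv, ?_⟩
    rw [← hμ]
    have hμ0 : 0 ≤ D 0 0 := (hD.diag_pos (i := 0)).le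
    calc D 0 0 ^ (n + 2) = D 0 0 * D 0 0 ^ (n + 1) := pow_succ' _ _
      _ ≤ D 0 0 * ((4 / 3) ^ (n + 1) * ((fun i => (w i : ℝ)) ⬝ᵥ (P - Q * D⁻¹ * Qᴴ) *ᵥ
            (fun i => (w i : ℝ))) ^ (n + 1)) := by
        rw [← mul_pow]
        gcongr
      _ ≤ D 0 0 * ((4 / 3) ^ (n + 1) * ((4 / 3) ^ (n + 1).choose 2 * (P - Q * D⁻¹ * Qᴴ).det)) := by
        gcongr
      _ = (4 / 3) ^ (n + 2).choose 2 * A.det := by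
        rw [hdetA, Nat.choose_succ_succ' (n + 1) 1, Nat.choose_one_right, pow_add]
        ring

end PosDef

end Matrix

theorem hermite_minimum_of_posdef_quadratic_form_general
    (m : ℕ) (hm : 1 ≤ m) (A : Matrix (Fin m) (Fin m) ℝ)
    (hpd : A.PosDef) :
    ∃ v : Fin m → ℤ, v ≠ 0 ∧
      0 < (fun i => (v i : ℝ)) ⬝ᵥ A.mulVec (fun i => (v i : ℝ)) ∧
      (fun i => (v i : ℝ)) ⬝ᵥ A.mulVec (fun i => (v i : ℝ)) ≤
        (4 / 3 : ℝ) ^ (((m : ℝ) - 1) / 2) * A.det ^ ((1 : ℝ) / (m : ℝ)) := by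
  obtain ⟨n, rfl⟩ := Nat.exists_eq_add_of_le' hm
  obtain ⟨v, hv, hle⟩ := hpd.exists_intCast_pow_le_det n
  have hpos := hpd.dotProduct_mulVec_pos (intCast_comp_ne_zero hv)
  rw [star_trivial] at hpos
  refine ⟨v, hv, hpos, ?_⟩
  have hroot : (4 / 3 : ℝ) ^ (((n + 1 : ℕ) - 1 : ℝ) / 2) * A.det ^ ((1 : ℝ) / (n + 1 : ℕ)) =
      ((4 / 3) ^ (n + 1).choose 2 * A.det) ^ ((n + 1 : ℕ) : ℝ)⁻¹ := by
    rw [Real.mul_rpow (by positivity) hpd.det_pos.le, ← Real.rpow_natCast,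
      ← Real.rpow_mul (by norm_num), Nat.cast_choose_two, one_div]
    congr 2
    field_simp
  rw [hroot, Real.le_rpow_inv_iff_of_pos hpos.le (by have := hpd.det_pos; positivity) (by positivity),
    Real.rpow_natCast]
  exact hle

/-- Hermite's theorem on the minimum of a positive definite quadratic form:
for a symmetric positive definite real `m × m` matrix `A` with determinant `D`,
there is a nonzero integer vector `v` with `0 < vᵀ A v ≤ (4/3)^((m-1)/2) * D^(1/m)`. -/
theorem hermite_minimum_of_posdef_quadratic_form
    (m : ℕ) (hm : 1 ≤ m) (A : Matrix (Fin m) (Fin m) ℝ)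
    (hsymm : A.IsSymm) (hpd : A.PosDef) :
    ∃ v : Fin m → ℤ, v ≠ 0 ∧
      0 < (fun i => (v i : ℝ)) ⬝ᵥ A.mulVec (fun i => (v i : ℝ)) ∧
      (fun i => (v i : ℝ)) ⬝ᵥ A.mulVec (fun i => (v i : ℝ)) ≤
        (4 / 3 : ℝ) ^ (((m : ℝ) - 1) / 2) * A.det ^ ((1 : ℝ) / (m : ℝ)) :=
  hermite_minimum_of_posdef_quadratic_form_general m hm A hpd
end

section
/- Let f(x,y) = ax² + 2bxy + cy² be a positive definite binary quadratic form with integer coefficients a, b, c and determinant D = ac − b² > 0. Then there exists a matrix P ∈ GL₂(ℤ) such that the transformed form F, given by the matrix Pᵀ (a b; b c) P, has first coefficient A = F(1,0) satisfying 0 < A ≤ 2√(D/3). -/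
/-!
Pick `P ∈ GL₂(ℤ)` minimising the first coefficient `A` of the transformed form `(A B; B C)`;
a minimum exists because positive definiteness keeps every such coefficient a positive integer.
Transforming further by `(t 1; 1 0)` yields the first coefficient `A t² + 2 B t + C ≥ A`.
Taking `t` nearest to `-B / A`, so that `|2 (A t + B)| ≤ A`, the identity
`A (A t² + 2 B t + C) = (A t + B)² + D` gives `A² ≤ A² / 4 + D`, i.e. `3 A² ≤ 4 D`.
-/

open Matrix

namespace Matrix

lemma transpose_mul_mul_apply_self_pos {n : Type*} [Fintype n] [DecidableEq n]
    {M P : Matrix n n ℤ} (hM : (M.map ((↑) : ℤ → ℝ)).PosDef) (hP : IsUnit P.det) (i : n) :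
    0 < (Pᵀ * M * P) i i := by
  have hPR : (P.map ((↑) : ℤ → ℝ)).det ≠ 0 := by
    rw [← Int.cast_det]
    exact_mod_cast hP.ne_zero
  have hdiag := (hM.conjTranspose_mul_mul_same (mulVec_injective_of_det_ne_zero hPR)).diag_pos
    (i := i)
  have hcast : (Pᵀ * M * P).map (Int.castRingHom ℝ) =
      (P.map (Int.castRingHom ℝ))ᴴ * M.map (Int.castRingHom ℝ) * P.map (Int.castRingHom ℝ) := by
    rw [Matrix.map_mul, Matrix.map_mul, transpose_map,
      conjTranspose_eq_transpose_of_trivial]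
  have hpos : (0 : ℝ) < (Pᵀ * M * P).map (Int.castRingHom ℝ) i i := by rwa [hcast]
  exact Int.cast_pos.mp hpos

lemma exists_isUnit_det_forall_le_transpose_mul_mul_apply {n : Type*} [Fintype n]
    [DecidableEq n] {M : Matrix n n ℤ} (hM : (M.map ((↑) : ℤ → ℝ)).PosDef) (i : n) :
    ∃ P : Matrix n n ℤ, IsUnit P.det ∧
      ∀ Q : Matrix n n ℤ, IsUnit Q.det → (Pᵀ * M * P) i i ≤ (Qᵀ * M * Q) i i := by
  obtain ⟨_, ⟨P, hP, rfl⟩, hmin⟩ := Int.exists_least_of_bdd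
    (P := fun z => ∃ P : Matrix n n ℤ, IsUnit P.det ∧ (Pᵀ * M * P) i i = z)
    ⟨0, by rintro _ ⟨P, hP, rfl⟩; exact (transpose_mul_mul_apply_self_pos hM hP i).le⟩
    ⟨_, 1, by simp, rfl⟩
  exact ⟨P, hP, fun Q hQ => hmin _ ⟨Q, hQ, rfl⟩⟩

lemma IsSymm.transpose_mul_mul {n R : Type*} [Fintype n] [CommSemiring R]
    {M : Matrix n n R} (hM : M.IsSymm) (P : Matrix n n R) : (Pᵀ * M * P).IsSymm := by
  rw [IsSymm, transpose_mul, transpose_mul, transpose_transpose, hM.eq, Matrix.mul_assoc]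

lemma IsSymm.transpose_mul_mul_apply_zero_zero_fin_two {R : Type*} [CommRing R]
    {M : Matrix (Fin 2) (Fin 2) R} (hM : M.IsSymm) (t : R) :
    (!![t, 1; 1, 0]ᵀ * M * !![t, 1; 1, 0]) 0 0 = M 0 0 * t ^ 2 + 2 * M 0 1 * t + M 1 1 := by
  have h10 : M 1 0 = M 0 1 := hM.apply 0 1
  simp only [mul_apply, transpose_apply, of_apply, cons_val', cons_val_zero, cons_val_one,
    cons_val_fin_one, Fin.sum_univ_two, one_mul, mul_one, h10]
  ring

end Matrix

lemma Int.exists_abs_two_mul_add_mul_le (b : ℤ) {a : ℤ} (ha : 0 < a) :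
    ∃ t : ℤ, |2 * (b + a * t)| ≤ a := by
  -- `(2 b + a) / (2 a)` is `b / a` rounded to the nearest integer
  refine ⟨-((2 * b + a) / (2 * a)), abs_le.2 ⟨?_, ?_⟩⟩
  · have := Int.emod_nonneg (2 * b + a) (by omega : 2 * a ≠ 0)
    have := Int.emod_add_mul_ediv (2 * b + a) (2 * a)
    nlinarith
  · have := Int.emod_lt_of_pos (2 * b + a) (by omega : 0 < 2 * a)
    have := Int.emod_add_mul_ediv (2 * b + a) (2 * a)
    nlinarith

lemma Int.three_mul_sq_le_four_mul_of_forall_le {a b c : ℤ} (ha : 0 < a)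
    (hmin : ∀ t : ℤ, a ≤ a * t ^ 2 + 2 * b * t + c) : 3 * a ^ 2 ≤ 4 * (a * c - b ^ 2) := by
  obtain ⟨t, ht⟩ := Int.exists_abs_two_mul_add_mul_le b ha
  have hsq : (2 * (b + a * t)) ^ 2 ≤ a ^ 2 := sq_le_sq' (abs_le.1 ht).1 (abs_le.1 ht).2
  have hval : a * a ≤ a * (a * t ^ 2 + 2 * b * t + c) :=
    mul_le_mul_of_nonneg_left (hmin t) ha.le
  nlinarith

lemma Real.le_two_mul_sqrt_div_three {x d : ℝ} (h : 3 * x ^ 2 ≤ 4 * d) : x ≤ 2 * √(d / 3) := by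
  have : x / 2 ≤ √(d / 3) := Real.le_sqrt_of_sq_le (by nlinarith)
  linarith

theorem gauss_reduction_binary_quadratic_form_general
    (a b c : ℤ)
    (hpd : ((!![a, b; b, c]).map (fun x => (x : ℝ))).PosDef) :
    ∃ P : Matrix (Fin 2) (Fin 2) ℤ, IsUnit P.det ∧
      0 < (Pᵀ * !![a, b; b, c] * P) 0 0 ∧
      (((Pᵀ * !![a, b; b, c] * P) 0 0 : ℤ) : ℝ) ≤
        2 * Real.sqrt (((a * c - b ^ 2 : ℤ) : ℝ) / 3) := by
  obtain ⟨P, hP, hmin⟩ := exists_isUnit_det_forall_le_transpose_mul_mul_apply hpd 0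
  set N := Pᵀ * !![a, b; b, c] * P with hN
  have hNsymm : N.IsSymm :=
    IsSymm.transpose_mul_mul (by ext i j; fin_cases i <;> fin_cases j <;> rfl) P
  have hred (t : ℤ) : N 0 0 ≤ N 0 0 * t ^ 2 + 2 * N 0 1 * t + N 1 1 := by
    have hS : IsUnit (P * !![t, 1; 1, 0]).det := by simpa [det_mul, det_fin_two_of] using hP
    have hconj : (P * !![t, 1; 1, 0])ᵀ * !![a, b; b, c] * (P * !![t, 1; 1, 0]) =
        !![t, 1; 1, 0]ᵀ * N * !![t, 1; 1, 0] := by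
      simp only [hN, transpose_mul, Matrix.mul_assoc]
    simpa only [hconj, hNsymm.transpose_mul_mul_apply_zero_zero_fin_two] using hmin _ hS
  have hbound : 3 * N 0 0 ^ 2 ≤ 4 * N.det := by
    rw [det_fin_two, hNsymm.apply 0 1, ← sq]
    exact Int.three_mul_sq_le_four_mul_of_forall_le (transpose_mul_mul_apply_self_pos hpd hP 0) hred
  have hdet : N.det = a * c - b ^ 2 := by
    rw [hN, det_mul, det_mul, det_transpose, det_fin_two_of]
    linear_combination (a * c - b ^ 2) * Int.isUnit_sq hP
  refine ⟨P, hP, transpose_mul_mul_apply_self_pos hpd hP 0, ?_⟩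
  exact Real.le_two_mul_sqrt_div_three (by exact_mod_cast hdet ▸ hbound)

/-- Gauss's reduction theorem: every positive definite integral binary quadratic form
`a x² + 2 b x y + c y²` of determinant `D = a c - b² > 0` is arithmetically equivalent
(via some `P ∈ GL₂(ℤ)`) to a form whose first coefficient `A` satisfies
`0 < A ≤ 2 √(D/3)`. -/
theorem gauss_reduction_binary_quadratic_form
    (a b c : ℤ)
    (hpd : ((!![a, b; b, c]).map (fun x => (x : ℝ))).PosDef)
    (hD : 0 < a * c - b ^ 2) :
    ∃ P : Matrix (Fin 2) (Fin 2) ℤ, IsUnit P.det ∧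
      0 < (Pᵀ * !![a, b; b, c] * P) 0 0 ∧
      (((Pᵀ * !![a, b; b, c] * P) 0 0 : ℤ) : ℝ) ≤
        2 * Real.sqrt (((a * c - b ^ 2 : ℤ) : ℝ) / 3) :=
  gauss_reduction_binary_quadratic_form_general a b c hpd
end

section
/- Let A be a nonzero integer not divisible by 4. Then there exist integers α and β such that α² + β² ≡ −1 (mod A), i.e. A divides α² + β² + 1. -/
/-!
By the Chinese remainder theorem it suffices to write `-1` as a sum of two squares in
`ZMod (p ^ k)` for the prime powers exactly dividing `|A|`; as `4 ∤ A` these are `2`, where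
`-1 = 1 ^ 2 + 0 ^ 2`, and odd prime powers. For an odd prime `p` a solution of
`x ^ 2 + y ^ 2 = -1` in `ZMod p` (which exists by counting squares) can be taken with `x ≠ 0`,
so the derivative `2 x` of `X ^ 2 + (y ^ 2 + 1)` is a unit and Hensel's lemma lifts it to
`ℤ_[p]`, which maps onto every `ZMod (p ^ k)`.
-/

open Polynomial

def NegOneIsSumTwoSquares (R : Type*) [Ring R] : Prop :=
  ∃ x y : R, x ^ 2 + y ^ 2 = -1

namespace NegOneIsSumTwoSquares

variable {R S : Type*} [Ring R] [Ring S]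

theorem map (f : R →+* S) : NegOneIsSumTwoSquares R → NegOneIsSumTwoSquares S :=
  fun ⟨x, y, h⟩ => ⟨f x, f y, by rw [← map_pow, ← map_pow, ← map_add, h, map_neg, map_one]⟩

theorem prod : NegOneIsSumTwoSquares R → NegOneIsSumTwoSquares S →
    NegOneIsSumTwoSquares (R × S) :=
  fun ⟨x, y, h⟩ ⟨x', y', h'⟩ => ⟨(x, x'), (y, y'), Prod.ext h h'⟩

end NegOneIsSumTwoSquares

theorem negOneIsSumTwoSquares_zmod_mul {m n : ℕ} (hmn : m.Coprime n)
    (hm : NegOneIsSumTwoSquares (ZMod m)) (hn : NegOneIsSumTwoSquares (ZMod n)) :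
    NegOneIsSumTwoSquares (ZMod (m * n)) :=
  (hm.prod hn).map (ZMod.chineseRemainder hmn).symm.toRingHom

theorem PadicInt.norm_lt_one_iff_toZMod_eq_zero {p : ℕ} [Fact p.Prime] (x : ℤ_[p]) :
    ‖x‖ < 1 ↔ PadicInt.toZMod x = 0 := by
  rw [← PadicInt.mem_nonunits, ← IsLocalRing.mem_maximalIdeal, ← PadicInt.ker_toZMod,
    RingHom.mem_ker]

theorem PadicInt.norm_eq_one_iff_toZMod_ne_zero {p : ℕ} [Fact p.Prime] (x : ℤ_[p]) :
    ‖x‖ = 1 ↔ PadicInt.toZMod x ≠ 0 := by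
  rw [ne_eq, ← norm_lt_one_iff_toZMod_eq_zero, not_lt]
  exact ⟨ge_of_eq, (PadicInt.norm_le_one x).antisymm⟩

theorem negOneIsSumTwoSquares_padicInt {p : ℕ} [Fact p.Prime] (hp : p ≠ 2) :
    NegOneIsSumTwoSquares ℤ_[p] := by
  obtain ⟨a, b, hab, ha⟩ : ∃ a b : ZMod p, a ^ 2 + b ^ 2 = -1 ∧ a ≠ 0 := by
    obtain ⟨a, b, hab⟩ := ZMod.sq_add_sq p (-1)
    by_cases ha : a = 0
    · refine ⟨b, a, by rwa [add_comm], fun hb => ?_⟩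
      simp [ha, hb] at hab
    · exact ⟨a, b, hab, ha⟩
  set x : ℤ_[p] := ((a.val : ℕ) : ℤ_[p])
  set y : ℤ_[p] := ((b.val : ℕ) : ℤ_[p])
  have hx : PadicInt.toZMod x = a := by simp [x]
  have hy : PadicInt.toZMod y = b := by simp [y]
  have htwo : (2 : ZMod p) ≠ 0 :=
    Ring.two_ne_zero (by rwa [ZMod.ringChar_zmod_n])
  have hval : ‖x ^ 2 + (y ^ 2 + 1)‖ < 1 := by
    rw [PadicInt.norm_lt_one_iff_toZMod_eq_zero]
    simp [hx, hy, ← add_assoc, hab]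
  have hderiv : ‖2 * x‖ = 1 := by
    rw [PadicInt.norm_eq_one_iff_toZMod_ne_zero, map_mul, map_ofNat, hx]
    exact mul_ne_zero htwo ha
  obtain ⟨z, hz, -⟩ := hensels_lemma (F := X ^ 2 + C (y ^ 2 + 1)) (a := x) (by
    have hF : (X ^ 2 + C (y ^ 2 + 1)).derivative.aeval x = 2 * x := by
      rw [derivative_add, derivative_C, add_zero, derivative_X_pow]
      simp
    rw [hF, hderiv, one_pow]
    simpa using hval)
  exact ⟨z, y, by simpa [eq_neg_iff_add_eq_zero, add_assoc] using hz⟩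

theorem negOneIsSumTwoSquares_zmod_prime_pow {p : ℕ} [Fact p.Prime] (hp : p ≠ 2) (k : ℕ) :
    NegOneIsSumTwoSquares (ZMod (p ^ k)) :=
  (negOneIsSumTwoSquares_padicInt hp).map (PadicInt.toZModPow k)

theorem negOneIsSumTwoSquares_zmod_two : NegOneIsSumTwoSquares (ZMod 2) :=
  ⟨1, 0, by decide⟩

theorem negOneIsSumTwoSquares_zmod {n : ℕ} (hn : ¬ 4 ∣ n) : NegOneIsSumTwoSquares (ZMod n) := by
  induction n using Nat.recOnPosPrimePosCoprime with
  | prime_pow p k hp _ =>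
    have := Fact.mk hp
    rcases eq_or_ne p 2 with rfl | hp2
    · obtain rfl : k = 1 := by
        by_contra hk1
        exact hn (pow_dvd_pow 2 (by omega : 2 ≤ k))
      exact negOneIsSumTwoSquares_zmod_two
    · exact negOneIsSumTwoSquares_zmod_prime_pow hp2 k
  | zero => exact absurd (dvd_zero 4) hn
  | one => exact ⟨0, 0, Subsingleton.elim _ _⟩
  | coprime a b _ _ hab iha ihb =>
    exact negOneIsSumTwoSquares_zmod_mul hab (iha fun h => hn (h.mul_right b))
      (ihb fun h => hn (h.mul_left a))

theorem exists_dvd_sq_add_sq_add_one_iff (A : ℤ) :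
    (∃ α β : ℤ, A ∣ α ^ 2 + β ^ 2 + 1) ↔ NegOneIsSumTwoSquares (ZMod A.natAbs) := by
  simp only [NegOneIsSumTwoSquares, eq_neg_iff_add_eq_zero]
  constructor
  · rintro ⟨α, β, h⟩
    refine ⟨α, β, ?_⟩
    exact_mod_cast (ZMod.intCast_zmod_eq_zero_iff_dvd _ _).2 (Int.natAbs_dvd.2 h)
  · rintro ⟨x, y, h⟩
    refine ⟨x.cast, y.cast, Int.natAbs_dvd.1 ((ZMod.intCast_zmod_eq_zero_iff_dvd _ _).1 ?_)⟩
    push_cast [ZMod.intCast_cast, ZMod.cast_id']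
    exact h

theorem exists_sum_two_squares_congruent_neg_one_general
    (A : ℤ) (h4 : ¬ (4 ∣ A)) :
    ∃ α β : ℤ, A ∣ α ^ 2 + β ^ 2 + 1 :=
  (exists_dvd_sq_add_sq_add_one_iff A).2 <|
    negOneIsSumTwoSquares_zmod (by rwa [← Int.natCast_dvd])

/-- The preliminary step in Hermite's 1854 proof of the four-square theorem:
for any nonzero integer `A` not divisible by `4`, the congruence
`α² + β² ≡ -1 (mod A)` is solvable in integers. -/
theorem exists_sum_two_squares_congruent_neg_one
    (A : ℤ) (hA : A ≠ 0) (h4 : ¬ (4 ∣ A)) :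
    ∃ α β : ℤ, A ∣ α ^ 2 + β ^ 2 + 1 :=
  exists_sum_two_squares_congruent_neg_one_general A h4
end

section
/- Let p be a prime number with p ≡ 1 (mod 8). Then there exist integers x and y such that p = x² − 2y². -/
/-!
If `b² ≡ 2 (mod p)`, Thue's lemma gives integers `x, y`, not both zero, with `x ≡ b y (mod p)` and
`x², y² ≤ p`, hence `x², y² < p` as `p` is not a square. Then `p ∣ x² - 2y²` and
`-2p < x² - 2y² < p`, and `x² - 2y² ≠ 0` because `√2` is irrational, so `x² - 2y² = -p`.
Multiplying `x + y√2` by the unit `1 + √2` of norm `-1` gives a representation of `p`.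
-/

theorem ZMod.exists_sq_le_and_intCast_eq_mul (n : ℕ) [NeZero n] (b : ZMod n) :
    ∃ x y : ℤ, (x, y) ≠ 0 ∧ x ^ 2 ≤ n ∧ y ^ 2 ≤ n ∧ (x : ZMod n) = b * y := by
  set m := n.sqrt
  have hcard : (Finset.univ : Finset (ZMod n)).card <
      (Finset.range (m + 1) ×ˢ Finset.range (m + 1)).card := by
    simpa [Finset.card_product, ← sq] using Nat.lt_succ_sqrt' n
  obtain ⟨⟨u₁, v₁⟩, h₁, ⟨u₂, v₂⟩, h₂, hne, heq⟩ :=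
    Finset.exists_ne_map_eq_of_card_lt_of_maps_to hcard
      (f := fun uv : ℕ × ℕ => (uv.1 : ZMod n) - b * uv.2) fun _ _ => Finset.mem_univ _
  have sub_sq_le {u v : ℕ} (hu : u < m + 1) (hv : v < m + 1) : ((u : ℤ) - v) ^ 2 ≤ n := by
    have hm : (m : ℤ) ^ 2 ≤ n := mod_cast Nat.sqrt_le' n
    exact (sq_le_sq' (by omega) (by omega)).trans hm
  simp only [Finset.mem_product, Finset.mem_range] at h₁ h₂
  refine ⟨u₁ - u₂, v₁ - v₂, ?_, sub_sq_le h₁.1 h₂.1, sub_sq_le h₁.2 h₂.2, ?_⟩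
  · simp only [ne_eq, Prod.mk_eq_zero, sub_eq_zero, Nat.cast_inj]
    grind
  · push_cast
    linear_combination heq

theorem sq_sub_two_mul_sq_ne_zero {x y : ℤ} (hxy : (x, y) ≠ 0) : x ^ 2 - 2 * y ^ 2 ≠ 0 := by
  have two_ne_sq (n : ℤ) : 2 ≠ n * n := fun h => Int.sq_ne_two_mod_four n (by omega)
  have := (Zsqrtd.norm_eq_zero two_ne_sq ⟨x, y⟩).not.mpr (by simpa [Zsqrtd.ext_iff] using hxy)
  simpa [Zsqrtd.norm_def, sq, mul_assoc] using this

theorem Nat.Prime.exists_eq_sq_sub_two_mul_sq {p : ℕ} (hp : p.Prime)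
    (h2 : IsSquare (2 : ZMod p)) : ∃ x y : ℤ, (p : ℤ) = x ^ 2 - 2 * y ^ 2 := by
  have : NeZero p := ⟨hp.ne_zero⟩
  obtain ⟨b, hb⟩ := h2
  obtain ⟨x, y, hxy, hx, hy, hxby⟩ := ZMod.exists_sq_le_and_intCast_eq_mul p b
  have sq_ne {z : ℤ} : z ^ 2 ≠ p := fun h =>
    (Nat.prime_iff_prime_int.mp hp).not_isSquare ⟨z, by rw [← h, sq]⟩
  obtain ⟨k, hk⟩ : (p : ℤ) ∣ x ^ 2 - 2 * y ^ 2 := by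
    rw [← ZMod.intCast_zmod_eq_zero_iff_dvd]
    push_cast
    rw [hxby, hb]
    ring
  have hk0 : k ≠ 0 := by
    rintro rfl
    exact sq_sub_two_mul_sq_ne_zero hxy (by simpa using hk)
  have hk_bounds : -2 < k ∧ k < 1 := by
    have := hx.lt_of_ne sq_ne
    have := hy.lt_of_ne sq_ne
    constructor <;> nlinarith [sq_nonneg x, sq_nonneg y, hp.pos]
  obtain rfl : k = -1 := by omega
  exact ⟨x + 2 * y, x + y, by linear_combination hk⟩

/-- Jacobi's 1839 result: every prime `p ≡ 1 (mod 8)` is represented by the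
indefinite quadratic form `x² - 2 y²`. -/
theorem prime_one_mod_eight_eq_sq_sub_two_sq
    (p : ℕ) (hp : p.Prime) (hmod : p % 8 = 1) :
    ∃ x y : ℤ, (p : ℤ) = x ^ 2 - 2 * y ^ 2 := by
  have := Fact.mk hp
  exact hp.exists_eq_sq_sub_two_mul_sq <|
    (ZMod.exists_sq_eq_two_iff (by omega)).mpr (Or.inl hmod)
end

section
/- Let f : ℂ → ℂ be an entire (everywhere complex-differentiable) function that is not constant. Then f cannot have three periods ω₁, ω₂, ω₃ that are linearly independent over ℚ (viewing ℂ as a vector space over ℚ). -/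
/-!
The periods of `f` form an additive subgroup of `ℂ`. If that subgroup has an accumulation
point, `f` takes the value `f 0` on a set accumulating there, so `f` is constant by the
identity theorem. Otherwise it is discrete, and a discrete subgroup of `ℝ²` has `ℤ`-rank
equal to the real dimension of its span, at most `2`; but three `ℚ`-independent periods are
`ℤ`-independent and span a subgroup of rank `3`.
-/

open Function Filter Topology Submodule Module

namespace Function

def periods {α β : Type*} [AddGroup α] (f : α → β) : AddSubgroup α where
  carrier := {c | Periodic f c}
  zero_mem' := periodic_with_period_zero f
  add_mem' := Periodic.add_period
  neg_mem' := Periodic.neg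

theorem mem_periods {α β : Type*} [AddGroup α] {f : α → β} {c : α} :
    c ∈ periods f ↔ Periodic f c :=
  Iff.rfl

end Function

theorem LinearIndependent.card_le_finrank_of_mem_discrete {E ι : Type*} [NormedAddCommGroup E]
    [NormedSpace ℝ E] [FiniteDimensional ℝ E] [Fintype ι] {v : ι → E}
    (hv : LinearIndependent ℤ v) (S : AddSubgroup E) [DiscreteTopology S]
    (hvS : ∀ i, v i ∈ S) :
    Fintype.card ι ≤ finrank ℝ E := by
  have hspan : (span ℤ (Set.range v) : Set E) ⊆ S := by
    rw [← S.coe_toIntSubmodule, SetLike.coe_subset_coe, span_le]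
    rintro _ ⟨i, rfl⟩
    exact hvS i
  have hdisc : DiscreteTopology (span ℤ (Set.range v)) := DiscreteTopology.of_subset ‹_› hspan
  calc Fintype.card ι = Set.finrank ℤ (Set.range v) := (finrank_span_eq_card hv).symm
    _ = Set.finrank ℝ (Set.range v) := (Real.finrank_eq_int_finrank_of_discrete hdisc).symm
    _ ≤ finrank ℝ E := Submodule.finrank_le _

theorem AnalyticOnNhd.eq_const_of_not_discreteTopology_periods {𝕜 E : Type*}
    [NontriviallyNormedField 𝕜] [ConnectedSpace 𝕜] [NormedAddCommGroup E] [NormedSpace 𝕜 E]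
    {f : 𝕜 → E} (hf : AnalyticOnNhd 𝕜 f Set.univ) (h : ¬ DiscreteTopology (periods f)) :
    f = fun _ => f 0 := by
  obtain ⟨x, hx⟩ : ∃ x : periods f, (𝓝[≠] x).NeBot := by
    simpa [discreteTopology_iff_nhds_ne, neBot_iff] using h
  have hacc : ∃ᶠ z in 𝓝[≠] (x : 𝕜), z ∈ periods f :=
    frequently_mem_iff_neBot.mpr (nhds_ne_subtype_neBot_iff.mp hx)
  exact hf.eq_of_frequently_eq analyticOnNhd_const
    (hacc.mono fun z hz => (mem_periods.mp hz).eq)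

/-- There is no nonconstant entire function of one complex variable with three
periods that are linearly independent over `ℚ`. -/
theorem no_three_independent_periods
    (f : ℂ → ℂ) (hf : Differentiable ℂ f) (hnc : ¬ ∃ c : ℂ, ∀ z, f z = c) :
    ¬ ∃ ω₁ ω₂ ω₃ : ℂ,
        (∀ z, f (z + ω₁) = f z) ∧ (∀ z, f (z + ω₂) = f z) ∧ (∀ z, f (z + ω₃) = f z) ∧
        LinearIndependent ℚ ![ω₁, ω₂, ω₃] := by
  rintro ⟨ω₁, ω₂, ω₃, h₁, h₂, h₃, hind⟩
  have hdisc : DiscreteTopology (periods f) := by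
    by_contra h
    have hfa : AnalyticOnNhd ℂ f Set.univ := hf.differentiableOn.analyticOnNhd isOpen_univ
    exact hnc ⟨f 0, congrFun (hfa.eq_const_of_not_discreteTopology_periods h)⟩
  have hmem : ∀ i, ![ω₁, ω₂, ω₃] i ∈ periods f := by
    intro i
    fin_cases i
    exacts [mem_periods.mpr h₁, mem_periods.mpr h₂, mem_periods.mpr h₃]
  have hcard := (hind.restrict_scalars' ℤ).card_le_finrank_of_mem_discrete _ hmem
  simp [Complex.finrank_real_complex] at hcard
end

section
/- Let G be a finite subgroup of GL_n(ℂ), the group of invertible n×n complex matrices. Then there exists an n×n complex matrix H that is Hermitian (Hᴴ = H) and positive definite, such that gᴴ H g = H for every g ∈ G; that is, the positive definite Hermitian form x ↦ x̄ᵀ H x is left absolutely invariant by every transformation of the group. -/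
/-!
Weyl's unitary trick: averaging a positive definite form `H₀` over the group gives
`H = ∑ h, hᴴ H₀ h`. Each summand is positive definite because every `h` is invertible, and
right multiplication by `g` permutes the summands, so `gᴴ H g = H`.
-/

open Matrix ComplexOrder

namespace Matrix

variable {ι R : Type*} [Fintype ι] [DecidableEq ι]

theorem sum_conjTranspose_mul_mul_invariant [Semiring R] [StarRing R]
    {G : Type*} [Group G] [Fintype G] (ρ : G →* Matrix ι ι R) (H : Matrix ι ι R) (g : G) :
    (ρ g)ᴴ * (∑ h, (ρ h)ᴴ * H * ρ h) * ρ g = ∑ h, (ρ h)ᴴ * H * ρ h := by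
  rw [Finset.mul_sum, Finset.sum_mul]
  refine Fintype.sum_equiv (Equiv.mulRight g) _ _ fun h => ?_
  simp only [Equiv.coe_mulRight, map_mul, conjTranspose_mul, Matrix.mul_assoc]

theorem posDef_sum_conjTranspose_mul_mul [CommRing R] [PartialOrder R] [StarRing R]
    [AddLeftMono R] {κ : Type*} [Fintype κ] [Nonempty κ]
    {H : Matrix ι ι R} (hH : H.PosDef) {A : κ → Matrix ι ι R} (hA : ∀ k, IsUnit (A k)) :
    (∑ k, (A k)ᴴ * H * A k).PosDef :=
  posDef_sum Finset.univ_nonempty fun k _ =>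
    hH.conjTranspose_mul_mul_same (mulVec_injective_of_isUnit (hA k))

end Matrix

/-- The 1896 theorem of Loewy, Fuchs and Moore: every finite group of `n`-ary linear
homogeneous transformations leaves a positive definite Hermitian form absolutely
invariant: there is a Hermitian positive definite matrix `H` with `gᴴ H g = H`
for all `g` in the group. -/
theorem exists_invariant_posdef_hermitian_form
    (n : ℕ) (G : Subgroup (Matrix.GeneralLinearGroup (Fin n) ℂ)) (hG : Finite G) :
    ∃ H : Matrix (Fin n) (Fin n) ℂ, H.IsHermitian ∧ H.PosDef ∧
      ∀ g ∈ G, ((g : Matrix.GeneralLinearGroup (Fin n) ℂ) : Matrix (Fin n) (Fin n) ℂ)ᴴ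
          * H * ((g : Matrix.GeneralLinearGroup (Fin n) ℂ) : Matrix (Fin n) (Fin n) ℂ) = H := by
  have : Fintype G := Fintype.ofFinite G
  let ρ : G →* Matrix (Fin n) (Fin n) ℂ := (Units.coeHom _).comp G.subtype
  have hH : (∑ g, (ρ g)ᴴ * 1 * ρ g).PosDef :=
    posDef_sum_conjTranspose_mul_mul PosDef.one fun g => Units.isUnit _
  exact ⟨_, hH.isHermitian, hH, fun g hg => sum_conjTranspose_mul_mul_invariant ρ 1 ⟨g, hg⟩⟩
end

section
/- Let H be an n×n complex matrix that is Hermitian (Hᴴ = H) and positive definite, and let M be an n×n complex matrix with Mᴴ H M = H. Then M is diagonalizable over ℂ (there exists an invertible P with P⁻¹ M P diagonal), and every eigenvalue λ of M (every root of its characteristic polynomial) has modulus |λ| = 1. -/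
open Matrix ComplexOrder

/-! `M` is an isometry for the inner product `⟪x, y⟫ = xᴴ H y`. An isometry of a
finite-dimensional inner product space maps every invariant subspace onto itself, hence also
preserves its orthogonal complement; so it is semisimple, and over `ℂ` its eigenvectors span,
i.e. `M` is diagonalizable. An eigenvalue `μ` of an isometry satisfies `|μ| ‖v‖ = ‖v‖` for an
eigenvector `v ≠ 0`. -/

namespace LinearIsometry

variable {𝕜 E : Type*} [RCLike 𝕜] [NormedAddCommGroup E]

theorem norm_eq_one_of_hasEigenvalue [NormedSpace 𝕜 E] (T : E →ₗᵢ[𝕜] E) {μ : 𝕜}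
    (hμ : Module.End.HasEigenvalue T.toLinearMap μ) : ‖μ‖ = 1 := by
  obtain ⟨v, hv⟩ := hμ.exists_hasEigenvector
  have : ‖μ‖ * ‖v‖ = 1 * ‖v‖ := by
    rw [one_mul, ← norm_smul, ← hv.apply_eq_smul, coe_toLinearMap, T.norm_map]
  exact mul_right_cancel₀ (norm_ne_zero_iff.mpr hv.2) this

theorem isSemisimple [InnerProductSpace 𝕜 E] [FiniteDimensional 𝕜 E] (T : E →ₗᵢ[𝕜] E) :
    Module.End.IsSemisimple T.toLinearMap := by
  refine Module.End.isSemisimple_iff.mpr fun p hp => ⟨pᗮ, ?_, p.isCompl_orthogonal⟩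
  have hsurj : Function.Surjective (T.toLinearMap.restrict hp) :=
    LinearMap.injective_iff_surjective.mp fun x y hxy => Subtype.ext (T.injective congr($hxy))
  intro x hx y hy
  obtain ⟨⟨z, hz⟩, hzy⟩ := hsurj ⟨y, hy⟩
  have hTz : T z = y := congr($hzy)
  rw [← hTz, coe_toLinearMap, T.inner_map_map]
  exact hx z hz

end LinearIsometry

namespace Matrix

section Diagonalization

variable {K ι : Type*} [Field K] [Fintype ι] [DecidableEq ι]

theorem inv_basisFun_toMatrix_mul_mul_eq_diagonal {A : Matrix ι ι K}
    (b : Module.Basis ι K (ι → K)) {d : ι → K} (hb : ∀ j, A *ᵥ b j = d j • b j) :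
    ((Pi.basisFun K ι).toMatrix b)⁻¹ * A * (Pi.basisFun K ι).toMatrix b = diagonal d := by
  set P := (Pi.basisFun K ι).toMatrix b
  have : Invertible P := (Pi.basisFun K ι).invertibleToMatrix b
  have hAP : A * P = P * diagonal d := by
    ext i j
    rw [mul_diagonal, mul_comm]
    simpa [P, Module.Basis.toMatrix_apply, mulVec, dotProduct, Matrix.mul_apply]
      using congrFun (hb j) i
  rw [Matrix.mul_assoc, hAP, Matrix.inv_mul_cancel_left_of_invertible]

theorem exists_basis_mulVec_eq_smul_of_iSup_eigenspace_eq_top {A : Matrix ι ι K}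
    (h : ⨆ μ, Module.End.eigenspace (toLin' A) μ = ⊤) :
    ∃ (b : Module.Basis ι K (ι → K)) (d : ι → K), ∀ j, A *ᵥ b j = d j • b j := by
  have hspan : ⊤ ≤ Submodule.span K (⋃ μ, (Module.End.eigenspace (toLin' A) μ : Set (ι → K))) := by
    rw [← Submodule.iSup_eq_span, h]
  set b₀ := Module.Basis.ofSpan hspan
  set b := b₀.reindex (b₀.indexEquiv (Pi.basisFun K ι))
  have hb : ∀ j, ∃ μ, A *ᵥ b j = μ • b j := fun j => by
    obtain ⟨μ, hμ⟩ :=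
      Set.mem_iUnion.mp (Module.Basis.ofSpan_subset hspan ⟨_, (b₀.reindex_apply _ j).symm⟩)
    exact ⟨μ, Module.End.mem_eigenspace_iff.mp hμ⟩
  choose d hd using hb
  exact ⟨b, d, hd⟩

theorem exists_inv_mul_mul_eq_diagonal_of_iSup_eigenspace_eq_top {A : Matrix ι ι K}
    (h : ⨆ μ, Module.End.eigenspace (toLin' A) μ = ⊤) :
    ∃ P : Matrix ι ι K, IsUnit P.det ∧ ∃ d : ι → K, P⁻¹ * A * P = diagonal d := by
  obtain ⟨b, d, hb⟩ := exists_basis_mulVec_eq_smul_of_iSup_eigenspace_eq_top h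
  have := (Pi.basisFun K ι).invertibleToMatrix b
  exact ⟨_, isUnit_det_of_invertible _, d, inv_basisFun_toMatrix_mul_mul_eq_diagonal b hb⟩

end Diagonalization

section PreservedForm

variable {𝕜 n : Type*} [RCLike 𝕜] [Fintype n] [DecidableEq n] {H M : Matrix n n 𝕜}

/-- `M` as an isometry of `n → 𝕜` with the inner product `⟪x, y⟫ = xᴴ H y`. -/
noncomputable def toLinearIsometryOfPosDef (hH : H.PosDef) (hM : Mᴴ * H * M = H) :
    letI := H.toNormedAddCommGroup hH
    letI : SeminormedAddCommGroup (n → 𝕜) := NormedAddCommGroup.toSeminormedAddCommGroup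
    letI := H.toInnerProductSpace hH.posSemidef
    (n → 𝕜) →ₗᵢ[𝕜] (n → 𝕜) :=
  letI := H.toNormedAddCommGroup hH
  -- otherwise instance search prefers the sup norm `Pi.seminormedAddCommGroup`
  letI : SeminormedAddCommGroup (n → 𝕜) := NormedAddCommGroup.toSeminormedAddCommGroup
  letI := H.toInnerProductSpace hH.posSemidef
  (toLin' M).isometryOfInner fun x y => by
    change (H *ᵥ (M *ᵥ y)) ⬝ᵥ star (M *ᵥ x) = (H *ᵥ y) ⬝ᵥ star x
    rw [star_mulVec, dotProduct_comm, ← dotProduct_mulVec, mulVec_mulVec, mulVec_mulVec,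
      hM, dotProduct_comm]

theorem isSemisimple_toLin'_of_conjTranspose_mul_mul_eq (hH : H.PosDef)
    (hM : Mᴴ * H * M = H) : Module.End.IsSemisimple (toLin' M) :=
  letI := H.toNormedAddCommGroup hH
  letI : SeminormedAddCommGroup (n → 𝕜) := NormedAddCommGroup.toSeminormedAddCommGroup
  letI := H.toInnerProductSpace hH.posSemidef
  (toLinearIsometryOfPosDef hH hM).isSemisimple

theorem norm_eq_one_of_isRoot_charpoly_of_conjTranspose_mul_mul_eq (hH : H.PosDef)
    (hM : Mᴴ * H * M = H) {μ : 𝕜} (hμ : M.charpoly.IsRoot μ) : ‖μ‖ = 1 :=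
  letI := H.toNormedAddCommGroup hH
  letI : SeminormedAddCommGroup (n → 𝕜) := NormedAddCommGroup.toSeminormedAddCommGroup
  letI := H.toInnerProductSpace hH.posSemidef
  (toLinearIsometryOfPosDef hH hM).norm_eq_one_of_hasEigenvalue <|
    (Module.End.hasEigenvalue_iff_isRoot_charpoly _ _).mpr (charpoly_toLin' M ▸ hμ)

end PreservedForm

end Matrix

theorem loewy_transformations_fixing_posdef_hermitian_form_general
    (n : ℕ) (H M : Matrix (Fin n) (Fin n) ℂ)
    (hpd : H.PosDef) (hM : Mᴴ * H * M = H) :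
    (∃ P : Matrix (Fin n) (Fin n) ℂ, IsUnit P.det ∧
        ∃ d : Fin n → ℂ, P⁻¹ * M * P = Matrix.diagonal d) ∧
      ∀ μ : ℂ, M.charpoly.IsRoot μ → ‖μ‖ = 1 :=
  ⟨exists_inv_mul_mul_eq_diagonal_of_iSup_eigenspace_eq_top
      (isSemisimple_toLin'_of_conjTranspose_mul_mul_eq hpd hM).iSup_eigenspace_eq_top,
    fun _ hμ => norm_eq_one_of_isRoot_charpoly_of_conjTranspose_mul_mul_eq hpd hM hμ⟩

/-- Loewy's 1896 theorem: a positive definite Hermitian form can be transformed into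
itself only by transformations that are diagonalizable (simple elementary divisors)
with all roots of their characteristic polynomial of modulus `1`. -/
theorem loewy_transformations_fixing_posdef_hermitian_form
    (n : ℕ) (H M : Matrix (Fin n) (Fin n) ℂ)
    (hH : H.IsHermitian) (hpd : H.PosDef) (hM : Mᴴ * H * M = H) :
    (∃ P : Matrix (Fin n) (Fin n) ℂ, IsUnit P.det ∧
        ∃ d : Fin n → ℂ, P⁻¹ * M * P = Matrix.diagonal d) ∧
      ∀ μ : ℂ, M.charpoly.IsRoot μ → ‖μ‖ = 1 :=
  loewy_transformations_fixing_posdef_hermitian_form_general n H M hpd hM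
end

section
/- Let H be an n×n complex matrix that is Hermitian (Hᴴ = H) and positive definite. Then the set of n×n matrices M all of whose entries are Gaussian integers (complex numbers a + b i with a, b ∈ ℤ) and which satisfy Mᴴ H M = H is finite. -/
/-!
Write `H = Bᴴ B` with `B` invertible. In the operator norm, the C⋆-identity turns
`Mᴴ (Bᴴ B) M = Bᴴ B` into `‖B M‖ = ‖B‖`, so every automorph satisfies `‖M‖ ≤ ‖B⁻¹‖ ‖B‖`.
The entries of such an `M` are then Gaussian integers of bounded absolute value, of which there
are only finitely many.
-/

open Matrix ComplexOrder
open scoped Matrix.Norms.L2Operator MatrixOrder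

lemma Complex.finite_setOf_gaussian_norm_le (C : ℝ) :
    {z : ℂ | (∃ a b : ℤ, z = a + b * I) ∧ ‖z‖ ≤ C}.Finite := by
  let box := Set.Icc (-⌈C⌉) ⌈C⌉
  have box_finite : box.Finite := Set.finite_Icc _ _
  refine ((box_finite.prod box_finite).image fun p : ℤ × ℤ => (p.1 : ℂ) + p.2 * I).subset ?_
  rintro _ ⟨⟨a, b, rfl⟩, hz⟩
  have mem_box : ∀ k : ℤ, |(k : ℝ)| ≤ C → k ∈ box := fun k hk =>
    abs_le.mp (by exact_mod_cast hk.trans (Int.le_ceil C))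
  refine ⟨(a, b), ⟨mem_box a ?_, mem_box b ?_⟩, rfl⟩
  · simpa using (abs_re_le_norm _).trans hz
  · simpa using (abs_im_le_norm _).trans hz

namespace Matrix

variable {𝕜 n : Type*} [RCLike 𝕜] [Fintype n] [DecidableEq n]

lemma PosDef.exists_isUnit_eq_conjTranspose_mul_self {H : Matrix n n 𝕜} (hH : H.PosDef) :
    ∃ B, IsUnit B ∧ H = Bᴴ * B :=
  CStarAlgebra.isStrictlyPositive_iff_eq_star_mul_self.mp hH.isStrictlyPositive

lemma norm_entry_le_l2_opNorm (M : Matrix n n 𝕜) (i j : n) : ‖M i j‖ ≤ ‖M‖ :=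
  calc ‖M i j‖ = ‖(EuclideanSpace.equiv n 𝕜).symm (M *ᵥ Pi.single j 1) i‖ := by simp
    _ ≤ ‖(EuclideanSpace.equiv n 𝕜).symm (M *ᵥ Pi.single j 1)‖ := PiLp.norm_apply_le _ _
    _ ≤ ‖M‖ := by simpa using M.l2_opNorm_mulVec (EuclideanSpace.single j 1)

lemma l2_opNorm_le_of_conjTranspose_mul_mul_self_eq {B M : Matrix n n 𝕜} (hB : IsUnit B)
    (hM : Mᴴ * (Bᴴ * B) * M = Bᴴ * B) : ‖M‖ ≤ ‖B⁻¹‖ * ‖B‖ := by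
  have norm_mul_eq : ‖B * M‖ = ‖B‖ := by
    have : ‖B * M‖ * ‖B * M‖ = ‖B‖ * ‖B‖ := by
      rw [← l2_opNorm_conjTranspose_mul_self, ← l2_opNorm_conjTranspose_mul_self,
        conjTranspose_mul, ← hM]
      simp only [Matrix.mul_assoc]
    exact (mul_self_inj (norm_nonneg _) (norm_nonneg _)).mp this
  calc ‖M‖ = ‖B⁻¹ * (B * M)‖ := by
        rw [← Matrix.mul_assoc, nonsing_inv_mul _ ((isUnit_iff_isUnit_det B).mp hB),
          Matrix.one_mul]
    _ ≤ ‖B⁻¹‖ * ‖B * M‖ := l2_opNorm_mul _ _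
    _ = ‖B⁻¹‖ * ‖B‖ := by rw [norm_mul_eq]

lemma finite_setOf_gaussian_entries_l2_opNorm_le (C : ℝ) :
    {M : Matrix n n ℂ | (∀ i j, ∃ a b : ℤ, M i j = a + b * Complex.I) ∧ ‖M‖ ≤ C}.Finite := by
  refine (Set.Finite.pi fun _ => Set.Finite.pi fun _ =>
    Complex.finite_setOf_gaussian_norm_le C).subset ?_
  rintro M ⟨gaussian, norm_le⟩ i - j -
  exact ⟨gaussian i j, (norm_entry_le_l2_opNorm M i j).trans norm_le⟩

end Matrix

theorem finiteness_of_gaussian_integer_automorphs_of_posdef_hermitian_form_general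
    (n : ℕ) (H : Matrix (Fin n) (Fin n) ℂ) (hpd : H.PosDef) :
    {M : Matrix (Fin n) (Fin n) ℂ |
      (∀ i j, ∃ a b : ℤ, M i j = (a : ℂ) + (b : ℂ) * Complex.I) ∧
      Mᴴ * H * M = H}.Finite := by
  obtain ⟨B, hB, rfl⟩ := hpd.exists_isUnit_eq_conjTranspose_mul_self
  refine (finite_setOf_gaussian_entries_l2_opNorm_le (‖B⁻¹‖ * ‖B‖)).subset ?_
  rintro M ⟨gaussian, automorph⟩
  exact ⟨gaussian, l2_opNorm_le_of_conjTranspose_mul_mul_self_eq hB automorph⟩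

/-- Picard's observation: the group of linear transformations with Gaussian-integer
coefficients leaving a positive definite Hermitian form invariant is finite. -/
theorem finiteness_of_gaussian_integer_automorphs_of_posdef_hermitian_form
    (n : ℕ) (H : Matrix (Fin n) (Fin n) ℂ) (hH : H.IsHermitian) (hpd : H.PosDef) :
    {M : Matrix (Fin n) (Fin n) ℂ |
      (∀ i j, ∃ a b : ℤ, M i j = (a : ℂ) + (b : ℂ) * Complex.I) ∧
      Mᴴ * H * M = H}.Finite :=
  finiteness_of_gaussian_integer_automorphs_of_posdef_hermitian_form_general n H hpd
end

section
/- There do not exist positive integers a, b, c, d such that a² + b² = c² and a·b = 2·d²; that is, the area of a right-angled triangle with integer sides is never a perfect square. -/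
/-!
Fermat's infinite descent. Scaling a right triangle with square area down to a primitive one
with legs `m² - n²`, `2mn` gives a square `mn(m - n)(m + n)` whose four factors are pairwise
coprime, hence `m = p²`, `n = q²`, `m - n = r²`, `m + n = s²`. Then `p² ± q²` are both squares,
and the triangle with legs `(s + r)/2`, `(s - r)/2` has hypotenuse `p` and area `(q/2)²`;
as `p` is smaller than the original hypotenuse, such hypotenuses would decrease forever.
-/

theorem Int.exists_pos_sq_of_isCoprime_of_mul_eq_sq {a b c : ℤ} (ha : 0 < a) (h : IsCoprime a b)
    (heq : a * b = c ^ 2) : ∃ r, 0 < r ∧ a = r ^ 2 := by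
  obtain ⟨r, hr | hr⟩ := Int.sq_of_isCoprime h heq
  · have hr0 : r ≠ 0 := by rintro rfl; simp [hr] at ha
    exact ⟨|r|, abs_pos.mpr hr0, by rw [sq_abs, hr]⟩
  · nlinarith [sq_nonneg r]

theorem Int.exists_sq_of_sq_mul_eq_sq {g a d : ℤ} (hg : g ≠ 0) (h : g ^ 2 * a = d ^ 2) :
    ∃ e, a = e ^ 2 := by
  obtain ⟨e, rfl⟩ := (Int.pow_dvd_pow_iff two_ne_zero).mp ⟨a, h.symm⟩
  exact ⟨e, mul_left_cancel₀ (pow_ne_zero 2 hg) (by rw [h, mul_pow])⟩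

namespace PythagoreanTriple

variable {x y z : ℤ}

theorem exists_params_of_coprime_of_odd (h : PythagoreanTriple x y z)
    (hc : Int.gcd x y = 1) (hx : x % 2 = 1) (hx0 : 0 < x) (hy0 : 0 < y) (hz0 : 0 < z) :
    ∃ m n : ℤ, 0 < n ∧ n < m ∧ IsCoprime m n ∧ Odd (m - n) ∧
      x = m ^ 2 - n ^ 2 ∧ y = 2 * m * n ∧ z = m ^ 2 + n ^ 2 := by
  obtain ⟨m, n, rfl, rfl, rfl, hmn, hpar, hm⟩ := h.coprime_classification' hc hx hz0
  have hm0 : 0 < m := hm.lt_of_ne (by rintro rfl; simp at hy0)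
  have hn0 : 0 < n := pos_of_mul_pos_right hy0 (by positivity)
  have hnm : n < m := (pow_lt_pow_iff_left₀ hn0.le hm0.le two_ne_zero).mp (by linarith)
  exact ⟨m, n, hn0, hnm, Int.isCoprime_iff_gcd_eq_one.mpr hmn, Int.odd_iff.mpr (by omega),
    rfl, rfl, rfl⟩

theorem exists_params_of_coprime (h : PythagoreanTriple x y z)
    (hc : Int.gcd x y = 1) (hx0 : 0 < x) (hy0 : 0 < y) (hz0 : 0 < z) :
    ∃ m n : ℤ, 0 < n ∧ n < m ∧ IsCoprime m n ∧ Odd (m - n) ∧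
      x * y = 2 * m * n * (m ^ 2 - n ^ 2) ∧ z = m ^ 2 + n ^ 2 := by
  rcases h.even_odd_of_coprime hc with ⟨-, hy⟩ | ⟨hx, -⟩
  · obtain ⟨m, n, hn, hnm, hmn, hpar, rfl, rfl, rfl⟩ :=
      h.symm.exists_params_of_coprime_of_odd (by rwa [Int.gcd_comm]) hy hy0 hx0 hz0
    exact ⟨m, n, hn, hnm, hmn, hpar, by ring, rfl⟩
  · obtain ⟨m, n, hn, hnm, hmn, hpar, rfl, rfl, rfl⟩ :=
      h.exists_params_of_coprime_of_odd hc hx hx0 hy0 hz0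
    exact ⟨m, n, hn, hnm, hmn, hpar, by ring, rfl⟩

theorem exists_params (h : PythagoreanTriple x y z)
    (hx0 : 0 < x) (hy0 : 0 < y) (hz0 : 0 < z) :
    ∃ g m n : ℤ, 0 < g ∧ 0 < n ∧ n < m ∧ IsCoprime m n ∧ Odd (m - n) ∧
      x * y = g ^ 2 * (2 * m * n * (m ^ 2 - n ^ 2)) ∧ z = g * (m ^ 2 + n ^ 2) := by
  set g : ℤ := (Int.gcd x y : ℤ)
  have hg : 0 < Int.gcd x y := Int.gcd_pos_of_ne_zero_left _ hx0.ne'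
  have hgx : g ∣ x := Int.gcd_dvd_left x y
  have hgy : g ∣ y := Int.gcd_dvd_right x y
  have hgz : g ∣ z := h.gcd_dvd
  obtain ⟨m, n, hn, hnm, hmn, hpar, hxy, hz⟩ :=
    h.normalize.exists_params_of_coprime (Int.gcd_div_gcd_div_gcd hg)
      (Int.ediv_pos_of_pos_of_dvd hx0 (by positivity) hgx)
      (Int.ediv_pos_of_pos_of_dvd hy0 (by positivity) hgy)
      (Int.ediv_pos_of_pos_of_dvd hz0 (by positivity) hgz)
  refine ⟨g, m, n, by positivity, hn, hnm, hmn, hpar, ?_, ?_⟩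
  · rw [← hxy]
    linear_combination (-y) * Int.ediv_mul_cancel hgx - (x / g * g) * Int.ediv_mul_cancel hgy
  · rw [← hz, Int.mul_ediv_cancel' hgz]

end PythagoreanTriple

theorem Int.exists_pos_sq_of_mul_mul_sq_sub_sq_eq_sq {m n e : ℤ} (hn : 0 < n) (hnm : n < m)
    (hmn : IsCoprime m n) (hpar : Odd (m - n)) (he : m * n * (m ^ 2 - n ^ 2) = e ^ 2) :
    ∃ p q r s : ℤ, 0 < p ∧ 0 < q ∧ 0 < r ∧ 0 < s ∧
      m = p ^ 2 ∧ n = q ^ 2 ∧ m - n = r ^ 2 ∧ m + n = s ^ 2 := by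
  have hm_sub : IsCoprime m (m - n) := by
    rw [show m - n = -n + m * 1 by ring]; exact hmn.neg_right.add_mul_left_right 1
  have hm_add : IsCoprime m (m + n) := by
    rw [show m + n = n + m * 1 by ring]; exact hmn.add_mul_left_right 1
  have hn_sub : IsCoprime n (m - n) := by
    rw [show m - n = m + n * (-1) by ring]; exact hmn.symm.add_mul_left_right (-1)
  have hn_add : IsCoprime n (m + n) := by
    rw [show m + n = m + n * 1 by ring]; exact hmn.symm.add_mul_left_right 1
  have hsub_add : IsCoprime (m - n) (m + n) := by
    have h : IsCoprime (m - n) (2 * n) :=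
      (Int.isCoprime_two_right.mpr hpar).mul_right hn_sub.symm
    rw [show m + n = 2 * n + (m - n) * 1 by ring]; exact h.add_mul_left_right 1
  obtain ⟨p, hp, hpm⟩ := Int.exists_pos_sq_of_isCoprime_of_mul_eq_sq (c := e) (by linarith)
    (hmn.mul_right (hm_sub.mul_right hm_add)) (by linear_combination he)
  obtain ⟨q, hq, hqn⟩ := Int.exists_pos_sq_of_isCoprime_of_mul_eq_sq (c := e) hn
    (hmn.symm.mul_right (hn_sub.mul_right hn_add)) (by linear_combination he)
  obtain ⟨r, hr, hrmn⟩ := Int.exists_pos_sq_of_isCoprime_of_mul_eq_sq (c := e) (by linarith)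
    (hm_sub.symm.mul_right (hn_sub.symm.mul_right hsub_add)) (by linear_combination he)
  obtain ⟨s, hs, hsmn⟩ := Int.exists_pos_sq_of_isCoprime_of_mul_eq_sq (c := e) (by linarith)
    (hm_add.symm.mul_right (hn_add.symm.mul_right hsub_add.symm)) (by linear_combination he)
  exact ⟨p, q, r, s, hp, hq, hr, hs, hpm, hqn, hrmn, hsmn⟩

def IsSquareAreaHypotenuse (c : ℤ) : Prop :=
  ∃ a b d : ℤ, 0 < a ∧ 0 < b ∧ 0 < d ∧ a ^ 2 + b ^ 2 = c ^ 2 ∧ a * b = 2 * d ^ 2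

theorem isSquareAreaHypotenuse_of_sq_add_sq_of_sq_sub_sq {p q r s : ℤ} (hq : 0 < q)
    (hr : 0 ≤ r) (hs : 0 ≤ s) (hadd : p ^ 2 + q ^ 2 = s ^ 2) (hsub : p ^ 2 - q ^ 2 = r ^ 2) :
    IsSquareAreaHypotenuse p := by
  have hrs : r < s := (pow_lt_pow_iff_left₀ hr hs two_ne_zero).mp (by nlinarith)
  have hsr : Even (s - r) := by
    have h : Even (s ^ 2 - r ^ 2) := ⟨q ^ 2, by linarith⟩
    simpa [Int.even_sub, Int.even_pow] using h
  obtain ⟨v, hv⟩ := hsr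
  obtain rfl : s = r + 2 * v := by linarith
  have hq2 : q ^ 2 = 2 * ((r + v) * v) := by linarith
  obtain ⟨t, rfl⟩ : Even q := (Int.even_pow' two_ne_zero).mp ⟨(r + v) * v, by rw [hq2]; ring⟩
  exact ⟨r + v, v, t, by omega, by omega, by omega, by linarith, by linarith⟩

theorem IsSquareAreaHypotenuse.exists_pos_lt {c : ℤ} (hc : 0 < c) (h : IsSquareAreaHypotenuse c) :
    ∃ c', 0 < c' ∧ c' < c ∧ IsSquareAreaHypotenuse c' := by
  obtain ⟨a, b, d, ha, hb, hd, hpyth, harea⟩ := h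
  have htriple : PythagoreanTriple a b c := by
    unfold PythagoreanTriple; linear_combination hpyth
  obtain ⟨g, m, n, hg, hn, hnm, hmn, hpar, hab, rfl⟩ := htriple.exists_params ha hb hc
  obtain ⟨e, he⟩ := Int.exists_sq_of_sq_mul_eq_sq (a := m * n * (m ^ 2 - n ^ 2)) (d := d) hg.ne'
    (mul_left_cancel₀ two_ne_zero (by linear_combination harea - hab))
  obtain ⟨p, q, r, s, hp, hq, hr, hs, rfl, rfl, hr2, hs2⟩ :=
    Int.exists_pos_sq_of_mul_mul_sq_sub_sq_eq_sq hn hnm hmn hpar he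
  refine ⟨p, hp, ?_, isSquareAreaHypotenuse_of_sq_add_sq_of_sq_sub_sq hq hr.le hs.le
    (by linarith) (by linarith)⟩
  calc p ≤ p ^ 2 := le_self_pow₀ hp two_ne_zero
    _ < (p ^ 2) ^ 2 + (q ^ 2) ^ 2 := by nlinarith [pow_pos hq 2]
    _ ≤ g * ((p ^ 2) ^ 2 + (q ^ 2) ^ 2) := le_mul_of_one_le_left (by positivity) hg

theorem not_isSquareAreaHypotenuse {c : ℤ} (hc : 0 < c) : ¬ IsSquareAreaHypotenuse c := by
  lift c to ℕ using hc.le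
  induction c using Nat.strong_induction_on with
  | _ c ih =>
    intro h
    obtain ⟨c', hc', hlt, h'⟩ := h.exists_pos_lt hc
    lift c' to ℕ using hc'.le
    exact ih c' (by exact_mod_cast hlt) hc' h'

/-- Fermat's 1640 theorem: the area of a right-angled triangle with integer sides is
never a perfect square; there are no positive integers `a, b, c, d` with
`a² + b² = c²` and `a b = 2 d²`. -/
theorem fermat_right_triangle_area_not_square :
    ¬ ∃ a b c d : ℤ, 0 < a ∧ 0 < b ∧ 0 < c ∧ 0 < d ∧
        a ^ 2 + b ^ 2 = c ^ 2 ∧ a * b = 2 * d ^ 2 := by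
  rintro ⟨a, b, c, d, ha, hb, hc, hd, hpyth, harea⟩
  exact not_isSquareAreaHypotenuse hc ⟨a, b, d, ha, hb, hd, hpyth, harea⟩
end

section
/- Let A be a nonzero integer and let α, β be integers with α² + β² ≡ −1 (mod A). Define the quaternary quadratic form f(x,y,z,u) = (Ax + αz + βu)² + (Ay − βz + αu)² + z² + u². Then f is positive definite with determinant A⁴ (the determinant of its associated real symmetric matrix equals A⁴), and for all integers x, y, z, u the value f(x,y,z,u) is an integer divisible by A. -/
open Matrix

/-!
The form is `‖M v‖²` for the upper triangular matrix `M` with rows `(A, 0, α, β)`,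
`(0, A, -β, α)`, `(0, 0, 1, 0)`, `(0, 0, 0, 1)`, so its matrix is the Gram matrix `Mᵀ M`:
symmetric, positive definite because `det M = A² ≠ 0`, and of determinant `(det M)² = A⁴`.
Modulo `A` the form reduces to `(α² + β² + 1)(z² + u²)`, which vanishes by the congruence.
-/

section

variable {R : Type*} [CommRing R]

def hermiteMatrix (A α β : R) : Matrix (Fin 4) (Fin 4) R :=
  !![A, 0, α, β;
     0, A, -β, α;
     0, 0, 1, 0;
     0, 0, 0, 1]

theorem hermiteMatrix_mulVec (A α β : R) (v : Fin 4 → R) :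
    hermiteMatrix A α β *ᵥ v =
      ![A * v 0 + α * v 2 + β * v 3, A * v 1 - β * v 2 + α * v 3, v 2, v 3] := by
  ext i
  fin_cases i <;> simp [hermiteMatrix, mulVec, dotProduct, Fin.sum_univ_four]
  ring

theorem det_hermiteMatrix (A α β : R) : (hermiteMatrix A α β).det = A ^ 2 := by
  have hupper : (hermiteMatrix A α β).IsUpperTriangular := by
    intro i j hji
    fin_cases i <;> fin_cases j <;> simp_all [hermiteMatrix]
  rw [det_of_isUpperTriangular hupper, Fin.prod_univ_four]
  simp [hermiteMatrix, sq]

theorem dvd_hermite_form {A α β : R} (h : A ∣ α ^ 2 + β ^ 2 + 1) (x y z u : R) :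
    A ∣ (A * x + α * z + β * u) ^ 2 + (A * y - β * z + α * u) ^ 2 + z ^ 2 + u ^ 2 := by
  obtain ⟨k, hk⟩ := h
  exact ⟨A * x ^ 2 + A * y ^ 2 + 2 * x * (α * z + β * u) + 2 * y * (α * u - β * z)
      + k * (z ^ 2 + u ^ 2), by linear_combination (z ^ 2 + u ^ 2) * hk⟩

end

theorem Matrix.dotProduct_transpose_mul_self_mulVec {n R : Type*} [Fintype n] [CommSemiring R]
    (M : Matrix n n R) (v : n → R) : v ⬝ᵥ (Mᵀ * M) *ᵥ v = M *ᵥ v ⬝ᵥ M *ᵥ v := by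
  rw [← mulVec_mulVec, dotProduct_mulVec, vecMul_transpose]

theorem Matrix.posDef_transpose_mul_self_of_isUnit_det {n K : Type*} [Fintype n] [DecidableEq n]
    [Field K] [PartialOrder K] [StarRing K] [StarOrderedRing K] [TrivialStar K]
    {M : Matrix n n K} (hM : IsUnit M.det) : (Mᵀ * M).PosDef := by
  rw [← conjTranspose_eq_transpose_of_trivial]
  exact .conjTranspose_mul_self M
    (mulVec_injective_iff_isUnit.mpr ((isUnit_iff_isUnit_det M).mpr hM))

/-- The key construction in Hermite's 1854 proof of the four-square theorem: for a
nonzero integer `A` and integers `α, β` with `α² + β² ≡ -1 (mod A)`, the quaternary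
quadratic form `f(x,y,z,u) = (Ax + αz + βu)² + (Ay - βz + αu)² + z² + u²` is positive
definite with determinant `A⁴`, and its values at integer vectors are integers
divisible by `A`. -/
theorem hermite_four_square_form
    (A α β : ℤ) (hA : A ≠ 0) (hcong : A ∣ α ^ 2 + β ^ 2 + 1) :
    ∃ S : Matrix (Fin 4) (Fin 4) ℝ, S.IsSymm ∧
      (∀ v : Fin 4 → ℝ, v ⬝ᵥ S.mulVec v =
        ((A : ℝ) * v 0 + (α : ℝ) * v 2 + (β : ℝ) * v 3) ^ 2
          + ((A : ℝ) * v 1 - (β : ℝ) * v 2 + (α : ℝ) * v 3) ^ 2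
          + v 2 ^ 2 + v 3 ^ 2) ∧
      S.PosDef ∧ S.det = (A : ℝ) ^ 4 ∧
      ∀ x y z u : ℤ,
        A ∣ (A * x + α * z + β * u) ^ 2 + (A * y - β * z + α * u) ^ 2
              + z ^ 2 + u ^ 2 := by
  set M := hermiteMatrix (A : ℝ) α β
  have hdet : M.det = (A : ℝ) ^ 2 := det_hermiteMatrix _ _ _
  refine ⟨Mᵀ * M, isSymm_transpose_mul_self M, fun v => ?_,
    posDef_transpose_mul_self_of_isUnit_det ?_, ?_, dvd_hermite_form hcong⟩
  · rw [dotProduct_transpose_mul_self_mulVec, hermiteMatrix_mulVec]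
    simp only [dotProduct, Fin.sum_univ_four, cons_val_zero, cons_val_one, cons_val]
    ring
  · rw [hdet]
    exact (pow_ne_zero 2 (Int.cast_ne_zero.mpr hA)).isUnit
  · rw [det_mul, det_transpose, hdet]
    ring
end
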